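/- arXiv:2408.13749 — 2 statements merged into one kernel-verified Lean document; each statement's English description precedes it below -/
import Mathlib

section
/- Let p be a prime, n a positive integer, and for j = 1, ..., k suppose n = p^{r_j} * q_j * s_j where p does not divide q_j and r_1 > r_2 > ... > r_k > 0. Set v_j = q_j * s_j = n / p^{r_j}. Then for all i, j in {1, ..., k}, s_i divides v_j if and only if i ≤ j. -/
theorem stmt_6 (p n k : ℕ) (hp : p.Prime) (hn : 0 < n)
    (r q s : Fin k → ℕ)
    (hfac : ∀ j, n = p ^ r j * q j * s j)
    (hq : ∀ j, ¬ p ∣ q j)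
    (hr : StrictAnti r)
    (hrpos : ∀ j, 0 < r j) :
    ∀ i j, s i ∣ q j * s j ↔ i ≤ j := by
  have hs0 : ∀ t, s t ≠ 0 := by
    intro t h
    rw [hfac t, h, mul_zero] at hn; exact lt_irrefl 0 hn
  have hq0 : ∀ t, q t ≠ 0 := by
    intro t h
    rw [hfac t, h, mul_zero, zero_mul] at hn; exact lt_irrefl 0 hn
  have hqf : ∀ t, (q t).factorization p = 0 := by
    intro t
    exact Nat.factorization_eq_zero_of_not_dvd (hq t)
  have hkey : ∀ t, r t + (s t).factorization p = n.factorization p := by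
    intro t
    rw [hfac t, Nat.factorization_mul (Nat.mul_ne_zero (pow_ne_zero _ hp.pos.ne') (hq0 t)) (hs0 t),
      Nat.factorization_mul (pow_ne_zero _ hp.pos.ne') (hq0 t),
      Nat.Prime.factorization_pow hp]
    simp [hqf t]
  intro i j
  constructor
  · intro hd
    by_contra hij
    push_neg at hij
    have hrlt : r i < r j := hr hij
    have hle : (s i).factorization p ≤ (q j * s j).factorization p :=
      (Nat.factorization_le_iff_dvd (hs0 i) (Nat.mul_ne_zero (hq0 j) (hs0 j))).2 hd p
    rw [Nat.factorization_mul (hq0 j) (hs0 j)] at hle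
    simp only [Finsupp.coe_add, Pi.add_apply, hqf j, zero_add] at hle
    have := hkey i
    have := hkey j
    omega
  · intro hij
    have hrle : r j ≤ r i := hr.antitone hij
    have heq : p ^ r j * (p ^ (r i - r j) * (q i * s i)) = p ^ r j * (q j * s j) := by
      rw [← mul_assoc, ← pow_add]
      have : r j + (r i - r j) = r i := by omega
      rw [this, ← mul_assoc, ← hfac i, hfac j, mul_assoc]
    have hcancel : p ^ (r i - r j) * (q i * s i) = q j * s j :=
      Nat.eq_of_mul_eq_mul_left (pow_pos hp.pos _) heq
    exact ⟨p ^ (r i - r j) * q i, by rw [← hcancel]; ring⟩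
end

section
/- Let p and q be positive integers and let χ : S¹ × S¹ → S¹ be the group homomorphism χ(z, w) = z^p * w^{-q}, where S¹ is the circle group of unit complex numbers. Then the kernel of χ has exactly gcd(p, q) connected components. -/
/-!
Write `d = gcd p q`, `p = d a`, `q = d b` with `a A + b B = 1`. The map `(z, w) ↦ z ^ a * w ^ (-b)`
sends the kernel onto the `d`-th roots of unity, and its fibre over `ω` is the image of the
connected circle under `t ↦ (ω ^ A * t ^ b, ω ^ (-B) * t ^ a)`. Since the roots of unity form a
discrete space, the connected components of the kernel are exactly these `d` fibres.
-/

open Function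

theorem Continuous.connectedComponentsLift_bijective {X Y : Type*} [TopologicalSpace X]
    [TopologicalSpace Y] [TotallyDisconnectedSpace Y] {f : X → Y} (hf : Continuous f)
    (hsurj : Surjective f) (hfib : ∀ y, IsPreconnected (f ⁻¹' {y})) :
    Bijective hf.connectedComponentsLift := by
  refine ⟨fun a b hab => ?_, .of_comp (g := ((↑) : X → ConnectedComponents X))
    (by rwa [hf.connectedComponentsLift_comp_coe])⟩
  obtain ⟨x, rfl⟩ := ConnectedComponents.surjective_coe a
  obtain ⟨y, rfl⟩ := ConnectedComponents.surjective_coe b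
  rw [hf.connectedComponentsLift_apply_coe, hf.connectedComponentsLift_apply_coe] at hab
  exact ConnectedComponents.coe_eq_coe'.2 ((hfib (f y)).subset_connectedComponent rfl hab)

section CommGroup

variable {G : Type*} [CommGroup G]

theorem zpow_mul_zpow_mul_zpow_mul_zpow (x y : G) (a b c e m n : ℤ) :
    (x ^ a * y ^ b) ^ m * (x ^ c * y ^ e) ^ n = x ^ (a * m + c * n) * y ^ (b * m + e * n) := by
  simp only [mul_zpow, ← zpow_mul, zpow_add]
  exact mul_mul_mul_comm _ _ _ _

theorem zpow_mul_zpow_neg_zpow (x y : G) (a b d : ℤ) :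
    (x ^ a * y ^ (-b)) ^ d = x ^ (d * a) * y ^ (-(d * b)) := by
  rw [mul_zpow, ← zpow_mul, ← zpow_mul, mul_comm a d, mul_comm (-b) d, mul_neg]

-- The integer matrix with rows `(a, -b)` and `(B, A)` has determinant `1`, so it acts
-- invertibly on `G × G`; `t` is the second coordinate of the image of `x`.
theorem zpow_mul_zpow_neg_eq_iff {a b A B : ℤ} (hAB : a * A + b * B = 1) {ω : G} {x : G × G} :
    x.1 ^ a * x.2 ^ (-b) = ω ↔ ∃ t : G, (ω ^ A * t ^ b, ω ^ (-B) * t ^ a) = x := by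
  constructor
  · rintro rfl
    refine ⟨x.1 ^ B * x.2 ^ A, Prod.ext ?_ ?_⟩ <;> dsimp only <;>
      rw [zpow_mul_zpow_mul_zpow_mul_zpow]
    · rw [show a * A + B * b = 1 by linarith, show -b * A + A * b = 0 by ring,
        zpow_one, zpow_zero, mul_one]
    · rw [show a * -B + B * a = 0 by ring, show -b * -B + A * a = 1 by linarith,
        zpow_one, zpow_zero, one_mul]
  · rintro ⟨t, rfl⟩
    rw [zpow_mul_zpow_mul_zpow_mul_zpow, show A * a + -B * -b = 1 by linarith,
      show b * a + a * -b = 0 by ring, zpow_one, zpow_zero, mul_one]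

end CommGroup

section TopologicalGroup

variable {G : Type*} [CommGroup G] [TopologicalSpace G] [IsTopologicalGroup G] [ConnectedSpace G]

theorem natCard_connectedComponents_zpow_mul_zpow_neg_eq_one {m n : ℤ} (d a b A B : ℤ)
    (hm : m = d * a) (hn : n = d * b) (hAB : a * A + b * B = 1)
    [TotallyDisconnectedSpace {u : G // u ^ d = 1}] :
    Nat.card (ConnectedComponents {x : G × G // x.1 ^ m * x.2 ^ (-n) = 1}) =
      Nat.card {u : G // u ^ d = 1} := by
  subst hm hn
  let f (x : {x : G × G // x.1 ^ (d * a) * x.2 ^ (-(d * b)) = 1}) : {u : G // u ^ d = 1} :=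
    ⟨x.1.1 ^ a * x.1.2 ^ (-b), by rw [zpow_mul_zpow_neg_zpow, x.2]⟩
  let c (ω : {u : G // u ^ d = 1}) (t : G) :
      {x : G × G // x.1 ^ (d * a) * x.2 ^ (-(d * b)) = 1} :=
    ⟨(ω ^ A * t ^ b, ω ^ (-B) * t ^ a), by
      rw [← zpow_mul_zpow_neg_zpow, (zpow_mul_zpow_neg_eq_iff hAB).2 ⟨t, rfl⟩, ω.2]⟩
  have hf : Continuous f := by fun_prop
  have hfib (ω) : f ⁻¹' {ω} = Set.range (c ω) := by
    ext x
    simp only [Set.mem_preimage, Set.mem_singleton_iff, Set.mem_range, Subtype.ext_iff, f, c,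
      zpow_mul_zpow_neg_eq_iff hAB]
  have hsurj : Surjective f := fun ω => ⟨c ω 1, (hfib ω).ge (Set.mem_range_self 1)⟩
  exact Nat.card_congr (.ofBijective _ (hf.connectedComponentsLift_bijective hsurj fun ω =>
    hfib ω ▸ isPreconnected_range (by fun_prop)))

end TopologicalGroup

theorem Circle.natCard_zpow_eq_one (n : ℕ) [NeZero n] :
    Nat.card {u : Circle // u ^ (n : ℤ) = 1} = n := by
  refine .trans (Nat.card_congr ?_) (HasEnoughRootsOfUnity.natCard_rootsOfUnity Circle n)
  exact (_root_.toUnits : Circle ≃* Circleˣ).toEquiv.subtypeEquiv fun u => by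
    simp only [zpow_natCast, MulEquiv.toEquiv_eq_coe, EquivLike.coe_coe, mem_rootsOfUnity,
      ← map_pow, EmbeddingLike.map_eq_one_iff]

instance Circle.finite_zpow_eq_one (n : ℕ) [NeZero n] :
    Finite {u : Circle // u ^ (n : ℤ) = 1} :=
  Nat.finite_of_card_ne_zero ((Circle.natCard_zpow_eq_one n).trans_ne (NeZero.ne n))

theorem stmt_16_general (p q : ℕ) (hp : 0 < p) :
    Nat.card (ConnectedComponents
      {zw : Circle × Circle // zw.1 ^ p * zw.2 ^ (-(q : ℤ)) = 1}) = Nat.gcd p q := by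
  rw [show (fun zw : Circle × Circle => zw.1 ^ p * zw.2 ^ (-(q : ℤ)) = 1) =
    (fun zw => zw.1 ^ (p : ℤ) * zw.2 ^ (-(q : ℤ)) = 1) by simp only [zpow_natCast]]
  obtain ⟨a, hpa⟩ := Nat.gcd_dvd_left p q
  obtain ⟨b, hqb⟩ := Nat.gcd_dvd_right p q
  have hbezout := Nat.gcd_eq_gcd_ab p q
  generalize Nat.gcdA p q = A, Nat.gcdB p q = B at hbezout
  generalize Nat.gcd p q = d at *
  have : NeZero d := ⟨by rintro rfl; omega⟩
  have hpa' : (p : ℤ) = d * a := by exact_mod_cast hpa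
  have hqb' : (q : ℤ) = d * b := by exact_mod_cast hqb
  have hAB : (a : ℤ) * A + b * B = 1 :=
    mul_left_cancel₀ (NeZero.ne (d : ℤ)) (by linear_combination -hbezout - A * hpa' - B * hqb')
  rw [natCard_connectedComponents_zpow_mul_zpow_neg_eq_one d a b A B hpa' hqb' hAB,
    Circle.natCard_zpow_eq_one]

theorem stmt_16 (p q : ℕ) (hp : 0 < p) (hq : 0 < q) :
    Nat.card (ConnectedComponents
      {zw : Circle × Circle // zw.1 ^ p * zw.2 ^ (-(q : ℤ)) = 1}) = Nat.gcd p q :=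
  stmt_16_general p q hp
end
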